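/- arXiv:2605.30464 — 6 statements merged into one kernel-verified Lean document; each statement's English description precedes it below -/
import Mathlib

section
/- Let K ≥ 1, let 𝒲 ⊂ ℝ^K be a compact set with B := sup_{w ∈ 𝒲} ‖w‖, let W and W' be Borel probability measures on ℝ^K supported in 𝒲, and let R and R' be Borel probability measures on ℝ^K with finite first moments; set m₁(R) := ∫ ‖r‖ dR(r). Then W₁(Y_{W,R}, Y_{W',R'}) ≤ m₁(R) · W₁(W, W') + B · W₁(R, R'). -/
/-!
Couple the two outcome laws through independent couplings: if `π` couples `W, W'` and `σ`
couples `R, R'`, push `π ⊗ σ` forward along `((w, w'), (r, r')) ↦ (⟪r, w⟫, ⟪r', w'⟫)`.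
Since `⟪r, w⟫ - ⟪r', w'⟫ = ⟪r, w - w'⟫ + ⟪r - r', w'⟫`, Cauchy–Schwarz and independence bound
the cost of this coupling by `m₁(R) · cost π + E_{W'}‖w'‖ · cost σ`, and `E_{W'}‖w'‖ ≤ B`
because `W'` lives on `𝒲`. Taking the infimum over `π` and `σ` gives the estimate.
-/

open MeasureTheory ENNReal

noncomputable section

/-- A coupling of two measures: a measure on the product whose marginals are the given
measures. -/
def IsCoupling {X Y : Type*} [MeasurableSpace X] [MeasurableSpace Y]
    (π : Measure (X × Y)) (μ : Measure X) (ν : Measure Y) : Prop :=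
  π.map Prod.fst = μ ∧ π.map Prod.snd = ν

/-- The 1-Wasserstein distance (as an extended nonnegative real): the infimum over
couplings of the integral of the distance. -/
noncomputable def W1 {X : Type*} [MeasurableSpace X] [PseudoEMetricSpace X]
    (μ ν : Measure X) : ℝ≥0∞ :=
  ⨅ (π : Measure (X × X)) (_ : IsCoupling π μ ν), ∫⁻ p, edist p.1 p.2 ∂π

/-- The induced portfolio-outcome law `Y_{W,R}`: pushforward of `W ⊗ R` under
`(w, r) ↦ ⟨r, w⟩`. -/
noncomputable def outcomeLaw {K : ℕ} (W R : Measure (EuclideanSpace ℝ (Fin K))) :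
    Measure ℝ :=
  (W.prod R).map (fun p => (inner ℝ p.2 p.1 : ℝ))

theorem ENNReal.le_mul_iInf_add_mul_iInf {ι κ : Sort*} [Nonempty ι] [Nonempty κ]
    {f : ι → ℝ≥0∞} {g : κ → ℝ≥0∞} {a b x : ℝ≥0∞} (ha : a ≠ ∞) (hb : b ≠ ∞)
    (h : ∀ i j, x ≤ a * f i + b * g j) : x ≤ a * (⨅ i, f i) + b * ⨅ j, g j := by
  rw [ENNReal.mul_iInf (by simp [ha]), ENNReal.mul_iInf (by simp [hb]), ENNReal.iInf_add]
  simp_rw [ENNReal.add_iInf]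
  exact le_iInf₂ h

section Coupling

variable {X Y Z : Type*} [MeasurableSpace X] [MeasurableSpace Y] [MeasurableSpace Z]

theorem isCoupling_prod (μ : Measure X) (ν : Measure Y) [IsProbabilityMeasure μ]
    [IsProbabilityMeasure ν] : IsCoupling (μ.prod ν) μ ν :=
  ⟨by simp, by simp⟩

theorem IsCoupling.isProbabilityMeasure {π : Measure (X × Y)} {μ : Measure X} {ν : Measure Y}
    [IsProbabilityMeasure μ] (h : IsCoupling π μ ν) : IsProbabilityMeasure π := by
  have : IsProbabilityMeasure (π.map Prod.fst) := h.1 ▸ ‹_›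
  exact Measure.isProbabilityMeasure_of_map Prod.fst

theorem IsCoupling.lintegral_comp_fst {π : Measure (X × Y)} {μ : Measure X} {ν : Measure Y}
    (h : IsCoupling π μ ν) {f : X → ℝ≥0∞} (hf : Measurable f) :
    ∫⁻ p, f p.1 ∂π = ∫⁻ x, f x ∂μ := by
  rw [← h.1, lintegral_map hf measurable_fst]

theorem IsCoupling.lintegral_comp_snd {π : Measure (X × Y)} {μ : Measure X} {ν : Measure Y}
    (h : IsCoupling π μ ν) {f : Y → ℝ≥0∞} (hf : Measurable f) :
    ∫⁻ p, f p.2 ∂π = ∫⁻ y, f y ∂ν := by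
  rw [← h.2, lintegral_map hf measurable_snd]

theorem IsCoupling.map_prod {π : Measure (X × X)} {σ : Measure (Y × Y)} [SFinite π] [SFinite σ]
    {μ μ' : Measure X} {ν ν' : Measure Y} (hπ : IsCoupling π μ μ') (hσ : IsCoupling σ ν ν')
    {g : X × Y → Z} (hg : Measurable g) :
    IsCoupling ((π.prod σ).map fun q => (g (q.1.1, q.2.1), g (q.1.2, q.2.2)))
      ((μ.prod ν).map g) ((μ'.prod ν').map g) := by
  have hF : Measurable fun q : (X × X) × (Y × Y) => (g (q.1.1, q.2.1), g (q.1.2, q.2.2)) := by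
    fun_prop
  constructor
  · rw [Measure.map_map measurable_fst hF, ← hπ.1, ← hσ.1,
      Measure.map_prod_map _ _ measurable_fst measurable_fst,
      Measure.map_map hg (measurable_fst.prodMap measurable_fst)]
    rfl
  · rw [Measure.map_map measurable_snd hF, ← hπ.2, ← hσ.2,
      Measure.map_prod_map _ _ measurable_snd measurable_snd,
      Measure.map_map hg (measurable_snd.prodMap measurable_snd)]
    rfl

variable [PseudoEMetricSpace X]

theorem W1_eq_iInf_coupling (μ ν : Measure X) :
    W1 μ ν = ⨅ π : {π : Measure (X × X) // IsCoupling π μ ν}, ∫⁻ p, edist p.1 p.2 ∂π.1 :=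
  iInf_subtype'

theorem W1_le_lintegral_edist {π : Measure (X × X)} {μ ν : Measure X} (h : IsCoupling π μ ν) :
    W1 μ ν ≤ ∫⁻ p, edist p.1 p.2 ∂π :=
  iInf₂_le π h

end Coupling

theorem lintegral_enorm_le_of_ae_mem {F : Type*} [NormedAddCommGroup F] [MeasurableSpace F]
    {μ : Measure F} [IsProbabilityMeasure μ] {s : Set F} (hs : μ sᶜ = 0) {B : ℝ}
    (hB : ∀ x ∈ s, ‖x‖ ≤ B) :
    ∫⁻ x, ‖x‖ₑ ∂μ ≤ ENNReal.ofReal B := by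
  calc ∫⁻ x, ‖x‖ₑ ∂μ ≤ ∫⁻ _, ENNReal.ofReal B ∂μ := by
        refine lintegral_mono_ae ?_
        filter_upwards [mem_ae_iff.2 hs] with x hx
        exact ofReal_norm x ▸ ENNReal.ofReal_le_ofReal (hB x hx)
    _ = ENNReal.ofReal B := by simp

section InnerProduct

variable {F : Type*} [NormedAddCommGroup F] [InnerProductSpace ℝ F]

theorem enorm_inner_le (x y : F) : ‖(inner ℝ x y : ℝ)‖ₑ ≤ ‖x‖ₑ * ‖y‖ₑ := by
  simpa only [enorm_eq_nnnorm, ← ENNReal.coe_mul, ENNReal.coe_le_coe] using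
    nnnorm_inner_le_nnnorm (𝕜 := ℝ) x y

theorem edist_inner_le (w w' r r' : F) :
    edist (inner ℝ r w) (inner ℝ r' w') ≤ edist w w' * ‖r‖ₑ + ‖w'‖ₑ * edist r r' := by
  have hsplit : inner ℝ r w - inner ℝ r' w' = inner ℝ r (w - w') + inner ℝ (r - r') w' := by
    rw [inner_sub_right, inner_sub_left]; ring
  simp only [edist_eq_enorm_sub]
  calc ‖inner ℝ r w - inner ℝ r' w'‖ₑ
      ≤ ‖(inner ℝ r (w - w') : ℝ)‖ₑ + ‖(inner ℝ (r - r') w' : ℝ)‖ₑ := hsplit ▸ enorm_add_le _ _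
    _ ≤ ‖r‖ₑ * ‖w - w'‖ₑ + ‖r - r'‖ₑ * ‖w'‖ₑ :=
        add_le_add (enorm_inner_le _ _) (enorm_inner_le _ _)
    _ = ‖w - w'‖ₑ * ‖r‖ₑ + ‖w'‖ₑ * ‖r - r'‖ₑ := by ring

variable [MeasurableSpace F] [BorelSpace F] [SecondCountableTopology F]

theorem lintegral_edist_inner_le (π σ : Measure (F × F)) [SFinite π] [SFinite σ] :
    ∫⁻ q : (F × F) × (F × F), edist (inner ℝ q.2.1 q.1.1) (inner ℝ q.2.2 q.1.2) ∂π.prod σ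
      ≤ (∫⁻ p, edist p.1 p.2 ∂π) * (∫⁻ p, ‖p.1‖ₑ ∂σ)
        + (∫⁻ p, ‖p.2‖ₑ ∂π) * ∫⁻ p, edist p.1 p.2 ∂σ := by
  rw [← lintegral_prod_mul (by fun_prop) (by fun_prop),
    ← lintegral_prod_mul (by fun_prop) (by fun_prop), ← lintegral_add_left (by fun_prop)]
  exact lintegral_mono fun q => edist_inner_le _ _ _ _

end InnerProduct

theorem W1_outcomeLaw_le {K : ℕ} {𝒲 : Set (EuclideanSpace ℝ (Fin K))} {B : ℝ}
    (hB : ∀ w ∈ 𝒲, ‖w‖ ≤ B) (W W' R R' : Measure (EuclideanSpace ℝ (Fin K)))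
    [IsProbabilityMeasure W] [IsProbabilityMeasure W']
    [IsProbabilityMeasure R] [IsProbabilityMeasure R']
    (hW' : W' 𝒲ᶜ = 0) (hR : ∫⁻ r, ‖r‖ₑ ∂ R ≠ ∞) :
    W1 (outcomeLaw W R) (outcomeLaw W' R')
      ≤ (∫⁻ r, ‖r‖ₑ ∂ R) * W1 W W' + ENNReal.ofReal B * W1 R R' := by
  have : Nonempty {π // IsCoupling π W W'} := ⟨⟨_, isCoupling_prod W W'⟩⟩
  have : Nonempty {σ // IsCoupling σ R R'} := ⟨⟨_, isCoupling_prod R R'⟩⟩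
  rw [W1_eq_iInf_coupling W, W1_eq_iInf_coupling R]
  refine ENNReal.le_mul_iInf_add_mul_iInf hR ENNReal.ofReal_ne_top fun ⟨π, hπ⟩ ⟨σ, hσ⟩ => ?_
  have := hπ.isProbabilityMeasure
  have := hσ.isProbabilityMeasure
  have hg : Measurable fun p : EuclideanSpace ℝ (Fin K) × EuclideanSpace ℝ (Fin K) =>
      (inner ℝ p.2 p.1 : ℝ) := by fun_prop
  calc W1 (outcomeLaw W R) (outcomeLaw W' R')
      ≤ ∫⁻ q, edist (inner ℝ q.2.1 q.1.1) (inner ℝ q.2.2 q.1.2) ∂π.prod σ := by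
        refine (W1_le_lintegral_edist (hπ.map_prod hσ hg)).trans_eq ?_
        exact lintegral_map measurable_edist (by fun_prop)
    _ ≤ (∫⁻ p, edist p.1 p.2 ∂π) * (∫⁻ p, ‖p.1‖ₑ ∂σ)
        + (∫⁻ p, ‖p.2‖ₑ ∂π) * ∫⁻ p, edist p.1 p.2 ∂σ := lintegral_edist_inner_le π σ
    _ ≤ (∫⁻ r, ‖r‖ₑ ∂ R) * (∫⁻ p, edist p.1 p.2 ∂π)
        + ENNReal.ofReal B * ∫⁻ p, edist p.1 p.2 ∂σ := by
        rw [hσ.lintegral_comp_fst measurable_enorm, hπ.lintegral_comp_snd measurable_enorm,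
          mul_comm]
        gcongr
        exact lintegral_enorm_le_of_ae_mem hW' hB

theorem stmt_0_general {K : ℕ}
    (𝒲 : Set (EuclideanSpace ℝ (Fin K))) (hcomp : IsCompact 𝒲)
    (B : ℝ) (hB : B = sSup ((fun w => ‖w‖) '' 𝒲))
    (W W' R R' : Measure (EuclideanSpace ℝ (Fin K)))
    [IsProbabilityMeasure W] [IsProbabilityMeasure W']
    [IsProbabilityMeasure R] [IsProbabilityMeasure R']
    (hW'supp : W' 𝒲ᶜ = 0)
    (hRm : ∫⁻ r, (‖r‖₊ : ℝ≥0∞) ∂ R < ⊤) :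
    W1 (outcomeLaw W R) (outcomeLaw W' R')
      ≤ (∫⁻ r, (‖r‖₊ : ℝ≥0∞) ∂ R) * W1 W W' + ENNReal.ofReal B * W1 R R' := by
  have hbdd : BddAbove ((fun w => ‖w‖) '' 𝒲) := (hcomp.image continuous_norm).bddAbove
  exact W1_outcomeLaw_le (fun w hw => hB ▸ le_csSup hbdd ⟨w, hw, rfl⟩) W W' R R' hW'supp hRm.ne

theorem stmt_0 {K : ℕ} (hK : 1 ≤ K)
    (𝒲 : Set (EuclideanSpace ℝ (Fin K))) (hcomp : IsCompact 𝒲)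
    (B : ℝ) (hB : B = sSup ((fun w => ‖w‖) '' 𝒲))
    (W W' R R' : Measure (EuclideanSpace ℝ (Fin K)))
    [IsProbabilityMeasure W] [IsProbabilityMeasure W']
    [IsProbabilityMeasure R] [IsProbabilityMeasure R']
    (hWsupp : W 𝒲ᶜ = 0) (hW'supp : W' 𝒲ᶜ = 0)
    (hRm : ∫⁻ r, (‖r‖₊ : ℝ≥0∞) ∂ R < ⊤) (hR'm : ∫⁻ r, (‖r‖₊ : ℝ≥0∞) ∂ R' < ⊤) :
    W1 (outcomeLaw W R) (outcomeLaw W' R')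
      ≤ (∫⁻ r, (‖r‖₊ : ℝ≥0∞) ∂ R) * W1 W W' + ENNReal.ofReal B * W1 R R' :=
  stmt_0_general 𝒲 hcomp B hB W W' R R' hW'supp hRm
end
end

section
/- Let K ≥ 1, let 𝒲 ⊂ ℝ^K be nonempty, convex, and compact, let Q be a Borel probability measure on 𝒲 with barycenter w̄ := ∫ w dQ(w) (so w̄ ∈ 𝒲), and let R be a Borel probability measure on ℝ^K with finite first moment. Let u : ℝ → ℝ be concave and nondecreasing with (w,r) ↦ u(⟨r,w⟩) integrable with respect to Q ⊗ R, and let γ ≥ 0. Define L(w,r) := −⟨r,w⟩ and L̄(w,r) := −⟨r,w̄⟩ on the product space (𝒲 × ℝ^K, Q ⊗ R). Let ρ be a real-valued functional on (Q ⊗ R)-integrable functions on 𝒲 × ℝ^K that is invariant under (Q ⊗ R)-almost-everywhere equality and satisfies dilatation monotonicity: for every integrable function f and every sub-σ-algebra 𝒢 of the product σ-algebra, ρ of the conditional expectation of f given 𝒢 is at most ρ(f). Then ∫ u(⟨r,w̄⟩) dR(r) − γ·ρ(L̄) ≥ ∫∫ u(⟨r,w⟩) d(Q ⊗ R)(w,r)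 − γ·ρ(L). -/
/-!
For every fixed `r`, Jensen's inequality for the concave `u` and the linear functional `⟪r, ·⟫`
gives `∫ u ⟪r, w⟫ dQ ≤ u ⟪r, w̄⟫`; integrating in `r` compares the utility terms. For the risk
terms, conditioning on the `r`-coordinate integrates out `w`, so by linearity of `L` in `w`,
`E[L | r] = L̄`; dilatation monotonicity then gives `ρ L̄ ≤ ρ L`, and `γ ≥ 0` finishes.
-/

open MeasureTheory ENNReal

noncomputable section

open Set in
theorem ConcaveOn.exists_le_affine {u : ℝ → ℝ} (hu : ConcaveOn ℝ univ u) :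
    ∃ a b : ℝ, ∀ t, u t ≤ a + b * t := by
  have hconv : ConvexOn ℝ univ (-u) := hu.neg
  have h0 : (0 : ℝ) ∈ interior univ := by simp
  refine ⟨u 0, -derivWithin (-u) (Ioi 0) 0, fun t => ?_⟩
  rcases lt_trichotomy t 0 with ht | rfl | ht
  · have hleft := hconv.slope_le_of_hasDerivWithinAt_Iio (mem_univ t) (mem_univ 0) ht
      (hconv.hasDerivWithinAt_leftDeriv_of_mem_interior h0)
    have := hleft.trans (hconv.leftDeriv_le_rightDeriv_of_mem_interior h0)
    rw [slope_def_field, div_le_iff₀ (by linarith)] at this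
    simp only [Pi.neg_apply] at this
    linarith
  · simp
  · have := hconv.rightDeriv_le_slope_of_mem_interior h0 (mem_univ t) ht
    rw [slope_def_field, le_div_iff₀ (by linarith)] at this
    simp only [Pi.neg_apply] at this
    linarith

section Product

variable {α β F : Type*} [MeasurableSpace α] {mβ : MeasurableSpace β}
  [NormedAddCommGroup F] [NormedSpace ℝ F] [CompleteSpace F]
  {μ : Measure α} [IsProbabilityMeasure μ] {ν : Measure β} [IsFiniteMeasure ν]

theorem condExp_comap_snd_prod_ae_eq_integral {f : α × β → F} (hf : Integrable f (μ.prod ν)) :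
    (μ.prod ν)[f | mβ.comap Prod.snd] =ᵐ[μ.prod ν]
      fun p => ∫ x, f (x, p.2) ∂μ := by
  set g : β → F := fun y => ∫ x, f (x, y) ∂μ
  have hg : AEStronglyMeasurable g ν := hf.integral_prod_right.1
  refine (ae_eq_condExp_of_forall_setIntegral_eq measurable_snd.comap_le hf
    (fun s _ _ => (hf.integral_prod_right.comp_snd μ).integrableOn) ?_ ?_).symm
  · rintro _ ⟨t, ht, rfl⟩ _
    have hrestrict : (μ.prod ν).restrict (Prod.snd ⁻¹' t) = μ.prod (ν.restrict t) := by
      rw [← Set.univ_prod, ← Measure.prod_restrict, Measure.restrict_univ]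
    rw [hrestrict, integral_fun_snd g, integral_prod_symm f (hrestrict ▸ hf.restrict)]
    simp [g]
  · refine ⟨fun p => hg.mk g p.2, hg.stronglyMeasurable_mk.comp_measurable
      (Measurable.of_comap_le le_rfl), ?_⟩
    refine ae_eq_comp (g := g) measurable_snd.aemeasurable ?_
    rw [Measure.map_snd_prod, measure_univ, one_smul]
    exact hg.ae_eq_mk

end Product

theorem integrable_id_of_isBounded {E : Type*} [NormedAddCommGroup E] [MeasurableSpace E]
    [OpensMeasurableSpace E] [SecondCountableTopology E] {μ : Measure E} [IsFiniteMeasure μ]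
    {s : Set E} (hs : Bornology.IsBounded s) (hμs : μ sᶜ = 0) : Integrable (fun x => x) μ := by
  obtain ⟨C, hC⟩ := isBounded_iff_forall_norm_le.mp hs
  exact .of_bound aestronglyMeasurable_id C ((ae_iff.mpr hμs).mono hC)

section InnerProduct

variable {E : Type*} [NormedAddCommGroup E] [InnerProductSpace ℝ E] [MeasurableSpace E]

theorem integrable_inner_prod {Q R : Measure E} (hQ : Integrable (fun w => w) Q)
    (hR : Integrable (fun r => r) R) :
    Integrable (fun p : E × E => inner ℝ p.2 p.1) (Q.prod R) :=
  hQ.op_fst_snd (op := fun (w r : E) => inner ℝ r w) (by fun_prop)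
    ⟨1, fun w r => by simpa [mul_comm] using norm_inner_le_norm (𝕜 := ℝ) r w⟩ hR

variable [CompleteSpace E] {Q R : Measure E} [IsProbabilityMeasure Q] [IsFiniteMeasure R]
  {u : ℝ → ℝ}

theorem ConcaveOn.integral_comp_inner_le (hu : ConcaveOn ℝ Set.univ u)
    (hQ : Integrable (fun w => w) Q) (r : E) (hur : Integrable (fun w => u (inner ℝ r w)) Q) :
    ∫ w, u (inner ℝ r w) ∂Q ≤ u (inner ℝ r (∫ w, w ∂Q)) := by
  rw [← integral_inner hQ r]
  exact hu.le_map_integral (hu.continuousOn isOpen_univ) isClosed_univ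
    (ae_of_all _ fun _ => Set.mem_univ _) (hQ.const_inner r) hur

theorem ConcaveOn.integral_prod_comp_inner_le [OpensMeasurableSpace E]
    (hu : ConcaveOn ℝ Set.univ u)
    (hQ : Integrable (fun w => w) Q) (hR : Integrable (fun r => r) R)
    (hint : Integrable (fun p : E × E => u (inner ℝ p.2 p.1)) (Q.prod R)) :
    ∫ p, u (inner ℝ p.2 p.1) ∂(Q.prod R) ≤ ∫ r, u (inner ℝ r (∫ w, w ∂Q)) ∂ R := by
  rw [integral_prod_symm _ hint]
  have hjensen : ∀ᵐ r ∂ R, ∫ w, u (inner ℝ r w) ∂Q ≤ u (inner ℝ r (∫ w, w ∂Q)) :=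
    hint.prod_left_ae.mono fun r hr => hu.integral_comp_inner_le hQ r hr
  obtain ⟨a, b, hab⟩ := hu.exists_le_affine
  have hcont : Continuous u := continuousOn_univ.mp (hu.continuousOn isOpen_univ)
  have hbarycenter : Integrable (fun r => u (inner ℝ r (∫ w, w ∂Q))) R :=
    integrable_of_le_of_le (hcont.comp (by fun_prop)).aestronglyMeasurable hjensen
      (ae_of_all _ fun r => hab _) hint.integral_prod_right
      ((integrable_const a).add ((hR.inner_const _).const_mul b))
  exact integral_mono_ae hint.integral_prod_right hbarycenter hjensen

end InnerProduct

theorem stmt_4_general {K : ℕ}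
    (𝒲 : Set (EuclideanSpace ℝ (Fin K)))
    (hcomp : IsCompact 𝒲)
    (Q : Measure (EuclideanSpace ℝ (Fin K))) [IsProbabilityMeasure Q]
    (hQsupp : Q 𝒲ᶜ = 0)
    (wbar : EuclideanSpace ℝ (Fin K)) (hwbar : wbar = ∫ w, w ∂Q)
    (R : Measure (EuclideanSpace ℝ (Fin K))) [IsProbabilityMeasure R]
    (hRm : ∫⁻ r, (‖r‖₊ : ℝ≥0∞) ∂ R < ⊤)
    (u : ℝ → ℝ) (hu_concave : ConcaveOn ℝ Set.univ u)
    (hu_int : Integrable (fun p : EuclideanSpace ℝ (Fin K) × EuclideanSpace ℝ (Fin K) =>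
      u ((inner ℝ p.2 p.1 : ℝ))) (Q.prod R))
    (γ : ℝ) (hγ : 0 ≤ γ)
    (ρ : (EuclideanSpace ℝ (Fin K) × EuclideanSpace ℝ (Fin K) → ℝ) → ℝ)
    -- invariance of ρ under (Q ⊗ R)-a.e. equality
    (hρ_ae : ∀ f g : EuclideanSpace ℝ (Fin K) × EuclideanSpace ℝ (Fin K) → ℝ,
        f =ᵐ[Q.prod R] g → ρ f = ρ g)
    -- dilatation monotonicity: ρ(E[f | 𝒢]) ≤ ρ(f)
    (hρ_dil : ∀ f : EuclideanSpace ℝ (Fin K) × EuclideanSpace ℝ (Fin K) → ℝ,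
        Integrable f (Q.prod R) →
        ∀ m : MeasurableSpace (EuclideanSpace ℝ (Fin K) × EuclideanSpace ℝ (Fin K)),
          m ≤ (inferInstance :
              MeasurableSpace (EuclideanSpace ℝ (Fin K) × EuclideanSpace ℝ (Fin K))) →
          ρ (MeasureTheory.condExp m (Q.prod R) f) ≤ ρ f) :
    (∫ p, u ((inner ℝ p.2 p.1 : ℝ)) ∂(Q.prod R))
        - γ * ρ (fun p => -(inner ℝ p.2 p.1 : ℝ))
      ≤ (∫ r, u ((inner ℝ r wbar : ℝ)) ∂ R)
        - γ * ρ (fun p => -(inner ℝ p.2 wbar : ℝ)) := by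
  have hQ := integrable_id_of_isBounded hcomp.isBounded hQsupp
  have hR : Integrable (fun r => r) R :=
    ⟨aestronglyMeasurable_id, by simpa [HasFiniteIntegral, enorm_eq_nnnorm] using hRm⟩
  have hloss : Integrable (fun p => -inner ℝ p.2 p.1) (Q.prod R) :=
    (integrable_inner_prod hQ hR).neg
  have hρ : ρ (fun p => -inner ℝ p.2 wbar) ≤ ρ (fun p => -inner ℝ p.2 p.1) := by
    -- the `inferInstance` in `hρ_dil` resolves to the bound `m`, so its side condition is `m ≤ m`
    refine (hρ_ae _ _ ?_).trans_le (hρ_dil _ hloss (.comap Prod.snd inferInstance) le_rfl)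
    refine ((condExp_comap_snd_prod_ae_eq_integral hloss).trans (ae_of_all _ fun p => ?_)).symm
    simp only [integral_neg, integral_inner hQ, hwbar]
  have hutility := hu_concave.integral_prod_comp_inner_le hQ hR hu_int
  rw [← hwbar] at hutility
  linarith [mul_le_mul_of_nonneg_left hρ hγ]

theorem stmt_4 {K : ℕ} (hK : 1 ≤ K)
    (𝒲 : Set (EuclideanSpace ℝ (Fin K))) (hne : 𝒲.Nonempty)
    (hconv : Convex ℝ 𝒲) (hcomp : IsCompact 𝒲)
    (Q : Measure (EuclideanSpace ℝ (Fin K))) [IsProbabilityMeasure Q]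
    (hQsupp : Q 𝒲ᶜ = 0)
    (wbar : EuclideanSpace ℝ (Fin K)) (hwbar : wbar = ∫ w, w ∂Q) (hwbarmem : wbar ∈ 𝒲)
    (R : Measure (EuclideanSpace ℝ (Fin K))) [IsProbabilityMeasure R]
    (hRm : ∫⁻ r, (‖r‖₊ : ℝ≥0∞) ∂ R < ⊤)
    (u : ℝ → ℝ) (hu_concave : ConcaveOn ℝ Set.univ u) (hu_mono : Monotone u)
    (hu_int : Integrable (fun p : EuclideanSpace ℝ (Fin K) × EuclideanSpace ℝ (Fin K) =>
      u ((inner ℝ p.2 p.1 : ℝ))) (Q.prod R))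
    (γ : ℝ) (hγ : 0 ≤ γ)
    (ρ : (EuclideanSpace ℝ (Fin K) × EuclideanSpace ℝ (Fin K) → ℝ) → ℝ)
    -- invariance of ρ under (Q ⊗ R)-a.e. equality
    (hρ_ae : ∀ f g : EuclideanSpace ℝ (Fin K) × EuclideanSpace ℝ (Fin K) → ℝ,
        f =ᵐ[Q.prod R] g → ρ f = ρ g)
    -- dilatation monotonicity: ρ(E[f | 𝒢]) ≤ ρ(f)
    (hρ_dil : ∀ f : EuclideanSpace ℝ (Fin K) × EuclideanSpace ℝ (Fin K) → ℝ,
        Integrable f (Q.prod R) →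
        ∀ m : MeasurableSpace (EuclideanSpace ℝ (Fin K) × EuclideanSpace ℝ (Fin K)),
          m ≤ (inferInstance :
              MeasurableSpace (EuclideanSpace ℝ (Fin K) × EuclideanSpace ℝ (Fin K))) →
          ρ (MeasureTheory.condExp m (Q.prod R) f) ≤ ρ f) :
    (∫ p, u ((inner ℝ p.2 p.1 : ℝ)) ∂(Q.prod R))
        - γ * ρ (fun p => -(inner ℝ p.2 p.1 : ℝ))
      ≤ (∫ r, u ((inner ℝ r wbar : ℝ)) ∂ R)
        - γ * ρ (fun p => -(inner ℝ p.2 wbar : ℝ)) :=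
  stmt_4_general 𝒲 hcomp Q hQsupp wbar hwbar R hRm u hu_concave hu_int γ hγ ρ hρ_ae hρ_dil
end
end

section
/- Let I ⊆ ℝ be an interval, let u : ℝ → ℝ be twice continuously differentiable on I with |u''(x)| ≤ M₂ for all x ∈ I, let K ≥ 1, let W be a Borel probability measure on ℝ^K with finite second moment, mean w̄ := ∫ w dW(w), and covariance matrix Σ_W, and let R be a Borel probability measure on ℝ^K with finite second moment. Assume ⟨r,w⟩ ∈ I for (W ⊗ R)-almost every (w,r) and ⟨r,w̄⟩ ∈ I for R-almost every r. Then ∫∫ u(⟨r,w⟩) dW(w) dR(r) ≥ ∫ u(⟨r,w̄⟩) dR(r) − (M₂/2) ∫ rᵀ Σ_W r dR(r). -/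
/-!
Fix `r`. Since `|u''| ≤ M₂` on the interval `I`, the second-order Taylor bound
`u x ≥ u a + u' a (x - a) - M₂/2 (x - a)²` holds for `a = ⟪r, w̄⟫` and `x = ⟪r, w⟫`.
Integrating it in `w` against `W` kills the linear term, because `w̄` is the mean of `W`, and
turns the quadratic term into the variance of `⟪r, ·⟫` under `W`, which is `rᵀ Σ_W r`.
Integrating the resulting bound in `r` against `R` and applying Fubini gives the inequality.
Taylor's bound at a fixed point of `I` also shows that `u` grows at most quadratically on `I`,
so the second moments of `W` and `R` make every integral involved finite.
-/

open MeasureTheory ENNReal ProbabilityTheory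

section Taylor

variable {I : Set ℝ}

lemma Set.OrdConnected.isMinOn_of_hasDerivWithinAt (hI : I.OrdConnected) {g g' : ℝ → ℝ} {a : ℝ}
    (ha : a ∈ I) (hg : ∀ x ∈ I, HasDerivWithinAt g (g' x) I x)
    (hright : ∀ x ∈ I, a < x → 0 ≤ g' x) (hleft : ∀ x ∈ I, x < a → g' x ≤ 0) :
    IsMinOn g I a := by
  intro x hx
  have hcont : ContinuousOn g I := fun t ht => (hg t ht).continuousWithinAt
  have hderiv : ∀ {s}, s ⊆ I → ∀ t ∈ interior s, HasDerivWithinAt g (g' t) (interior s) t :=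
    fun hs t ht => (hg t (hs (interior_subset ht))).mono (interior_subset.trans hs)
  rcases le_total a x with hax | hxa
  · have hsub : Set.Icc a x ⊆ I := hI.out ha hx
    refine monotoneOn_of_hasDerivWithinAt_nonneg (convex_Icc a x) (hcont.mono hsub)
      (hderiv hsub) (fun t ht => ?_) (Set.left_mem_Icc.2 hax) (Set.right_mem_Icc.2 hax) hax
    rw [interior_Icc] at ht
    exact hright t (hsub (Set.Ioo_subset_Icc_self ht)) ht.1
  · have hsub : Set.Icc x a ⊆ I := hI.out hx ha
    refine antitoneOn_of_hasDerivWithinAt_nonpos (convex_Icc x a) (hcont.mono hsub)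
      (hderiv hsub) (fun t ht => ?_) (Set.left_mem_Icc.2 hxa) (Set.right_mem_Icc.2 hxa) hxa
    rw [interior_Icc] at ht
    exact hleft t (hsub (Set.Ioo_subset_Icc_self ht)) ht.2

variable {u u' u'' : ℝ → ℝ} {M₂ : ℝ}

lemma taylor_two_lower_bound (hI : I.OrdConnected)
    (hu' : ∀ x ∈ I, HasDerivWithinAt u (u' x) I x)
    (hu'' : ∀ x ∈ I, HasDerivWithinAt u' (u'' x) I x) (hM₂ : ∀ x ∈ I, |u'' x| ≤ M₂)
    {a x : ℝ} (ha : a ∈ I) (hx : x ∈ I) :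
    u a + u' a * (x - a) - M₂ / 2 * (x - a) ^ 2 ≤ u x := by
  have hlip : ∀ t ∈ I, |u' t - u' a| ≤ M₂ * |t - a| := fun t ht => by
    simpa only [Real.norm_eq_abs] using hI.convex.norm_image_sub_le_of_norm_hasDerivWithin_le
      hu'' (fun y hy => by simpa only [Real.norm_eq_abs] using hM₂ y hy) ha ht
  -- adding `M₂/2 (· - a)²` to `u` minus its tangent at `a` gives a function minimal at `a`
  have hg : ∀ t ∈ I, HasDerivWithinAt (fun t => u t - u' a * t + M₂ / 2 * (t - a) ^ 2)
      (u' t - u' a + M₂ * (t - a)) I t := fun t ht => by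
    have hlin : HasDerivWithinAt (fun t => u' a * t) (u' a) I t := by
      simpa using (hasDerivWithinAt_id t I).const_mul (u' a)
    have hsq : HasDerivWithinAt (fun t => (t - a) ^ 2) (2 * (t - a)) I t := by
      simpa using ((hasDerivWithinAt_id t I).sub_const a).fun_pow 2
    exact (((hu' t ht).fun_sub hlin).fun_add (hsq.const_mul (M₂ / 2))).congr_deriv (by ring)
  have hmin := hI.isMinOn_of_hasDerivWithinAt ha hg
    (fun t ht hat => by
      have := hlip t ht
      rw [abs_of_pos (sub_pos.2 hat)] at this
      linarith [neg_abs_le (u' t - u' a)])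
    (fun t ht hta => by
      have := hlip t ht
      rw [abs_of_neg (sub_neg.2 hta)] at this
      linarith [le_abs_self (u' t - u' a)])
    hx
  simp only [Set.mem_ofPred_eq, sub_self] at hmin
  linarith

lemma abs_taylor_two_remainder_le (hI : I.OrdConnected)
    (hu' : ∀ x ∈ I, HasDerivWithinAt u (u' x) I x)
    (hu'' : ∀ x ∈ I, HasDerivWithinAt u' (u'' x) I x) (hM₂ : ∀ x ∈ I, |u'' x| ≤ M₂)
    {a x : ℝ} (ha : a ∈ I) (hx : x ∈ I) :
    |u x - u a - u' a * (x - a)| ≤ M₂ / 2 * (x - a) ^ 2 := by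
  have hlow := taylor_two_lower_bound hI hu' hu'' hM₂ ha hx
  have hup := taylor_two_lower_bound (u := -u) (u' := -u') (u'' := -u'') hI
    (fun t ht => (hu' t ht).neg) (fun t ht => (hu'' t ht).neg)
    (fun t ht => by simpa only [Pi.neg_apply, abs_neg] using hM₂ t ht) ha hx
  simp only [Pi.neg_apply] at hup
  rw [abs_le]
  constructor <;> linarith

end Taylor

section Jensen

variable {I : Set ℝ} {u u' u'' : ℝ → ℝ} {M₂ : ℝ}
  {Ω : Type*} [MeasurableSpace Ω] {μ : Measure Ω} [IsProbabilityMeasure μ] {X : Ω → ℝ}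

lemma integrable_comp_of_bounded_second_deriv (hI : I.OrdConnected)
    (hu' : ∀ x ∈ I, HasDerivWithinAt u (u' x) I x)
    (hu'' : ∀ x ∈ I, HasDerivWithinAt u' (u'' x) I x) (hM₂ : ∀ x ∈ I, |u'' x| ≤ M₂)
    (hX : MemLp X 2 μ) (hXI : ∀ᵐ ω ∂μ, X ω ∈ I) :
    Integrable (fun ω => u (X ω)) μ := by
  obtain ⟨ω₀, hω₀⟩ := hXI.exists
  set a := X ω₀
  have hmeas : AEStronglyMeasurable (fun ω => u (X ω)) μ := by
    have hmap : ∀ᵐ y ∂(μ.map X), y ∈ I := (ae_map_iff hX.aemeasurable hI.measurableSet).2 hXI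
    have hu : AEStronglyMeasurable u (μ.map X) := by
      rw [← Measure.restrict_eq_self_of_ae_mem hmap]
      exact ContinuousOn.aestronglyMeasurable (fun x hx => (hu' x hx).continuousWithinAt)
        hI.measurableSet
    exact hu.comp_aemeasurable hX.aemeasurable
  have hdev : MemLp (fun ω => X ω - a) 2 μ := hX.sub (memLp_const a)
  have hbound : Integrable (fun ω => |u a| + |u' a| * |X ω - a| + M₂ / 2 * (X ω - a) ^ 2) μ :=
    ((integrable_const _).add ((hdev.integrable one_le_two).abs.const_mul _)).add
      (hdev.integrable_sq.const_mul _)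
  refine hbound.mono' hmeas (hXI.mono fun ω hω => ?_)
  have hrem := abs_taylor_two_remainder_le hI hu' hu'' hM₂ hω₀ hω
  calc ‖u (X ω)‖ = |(u (X ω) - u a - u' a * (X ω - a)) + u a + u' a * (X ω - a)| := by
        rw [Real.norm_eq_abs]; ring_nf
    _ ≤ |u (X ω) - u a - u' a * (X ω - a)| + |u a| + |u' a * (X ω - a)| := abs_add_three _ _ _
    _ ≤ |u a| + |u' a| * |X ω - a| + M₂ / 2 * (X ω - a) ^ 2 := by
        rw [abs_mul]; linarith

lemma integral_comp_ge_sub_variance (hI : I.OrdConnected)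
    (hu' : ∀ x ∈ I, HasDerivWithinAt u (u' x) I x)
    (hu'' : ∀ x ∈ I, HasDerivWithinAt u' (u'' x) I x) (hM₂ : ∀ x ∈ I, |u'' x| ≤ M₂)
    (hX : MemLp X 2 μ) (hXI : ∀ᵐ ω ∂μ, X ω ∈ I) (hmean : μ[X] ∈ I) :
    u μ[X] - M₂ / 2 * Var[X; μ] ≤ ∫ ω, u (X ω) ∂μ := by
  set m := μ[X]
  have hdev : MemLp (fun ω => X ω - m) 2 μ := hX.sub (memLp_const m)
  have hlin : Integrable (fun ω => u' m * (X ω - m)) μ :=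
    (hdev.integrable one_le_two).const_mul _
  have haff : Integrable (fun ω => u m + u' m * (X ω - m)) μ := (integrable_const _).add hlin
  have hquad : Integrable (fun ω => M₂ / 2 * (X ω - m) ^ 2) μ := hdev.integrable_sq.const_mul _
  calc u m - M₂ / 2 * Var[X; μ]
      = ∫ ω, (u m + u' m * (X ω - m) - M₂ / 2 * (X ω - m) ^ 2) ∂μ := by
        rw [integral_sub haff hquad,
          integral_add (integrable_const _) hlin, integral_const_mul, integral_const_mul,
          integral_sub (hX.integrable one_le_two) (integrable_const m),
          variance_eq_integral hX.aemeasurable]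
        simp [m]
    _ ≤ ∫ ω, u (X ω) ∂μ :=
        integral_mono_ae (haff.sub hquad)
          (integrable_comp_of_bounded_second_deriv hI hu' hu'' hM₂ hX hXI)
          (hXI.mono fun ω hω => taylor_two_lower_bound hI hu' hu'' hM₂ hmean hω)

end Jensen

lemma memLp_id_two_of_lintegral_nnnorm_sq_lt_top {F : Type*} [NormedAddCommGroup F]
    [MeasurableSpace F] [BorelSpace F] [SecondCountableTopology F] {μ : Measure F}
    (h : ∫⁻ x, (‖x‖₊ : ℝ≥0∞) ^ (2 : ℕ) ∂μ < ⊤) : MemLp id 2 μ := by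
  refine (memLp_two_iff_integrable_sq_norm aestronglyMeasurable_id).2
    ⟨aestronglyMeasurable_id.norm.pow 2, ?_⟩
  rw [hasFiniteIntegral_def]
  convert h using 2 with x
  simp [← ENNReal.coe_pow, enorm_eq_nnnorm]

lemma MeasureTheory.MemLp.integrable_bilin_self {α F : Type*} [MeasurableSpace α] {μ : Measure α}
    [NormedAddCommGroup F] [NormedSpace ℝ F] {f : α → F} (hf : MemLp f 2 μ)
    (B : F →L[ℝ] F →L[ℝ] ℝ) : Integrable (fun x => B (f x) (f x)) μ := by
  refine ((hf.integrable_norm_pow two_ne_zero).const_mul ‖B‖).mono'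
    (((map_continuous B).clm_apply continuous_id).comp_aestronglyMeasurable
      hf.aestronglyMeasurable) (.of_forall fun x => ?_)
  simpa [sq, mul_assoc] using B.le_opNorm₂ (f x) (f x)

section InnerProduct

open scoped RealInnerProductSpace

variable {E : Type*} [NormedAddCommGroup E] [InnerProductSpace ℝ E] [MeasurableSpace E]
  [BorelSpace E] [SecondCountableTopology E] {W R : Measure E}

lemma memLp_inner_prod [SFinite W] [SFinite R] (hW : MemLp id 2 W) (hR : MemLp id 2 R) :
    MemLp (fun p : E × E => ⟪p.2, p.1⟫) 2 (W.prod R) := by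
  refine (memLp_two_iff_integrable_sq (by fun_prop)).2
    (((hW.integrable_norm_pow two_ne_zero).mul_prod (hR.integrable_norm_pow two_ne_zero)).mono'
      (by fun_prop) (.of_forall fun p => ?_))
  rw [norm_pow, Real.norm_eq_abs, ← mul_pow, mul_comm]
  exact pow_le_pow_left₀ (abs_nonneg _) (abs_real_inner_le_norm _ _) 2

variable [CompleteSpace E] [IsProbabilityMeasure W] [IsProbabilityMeasure R]
  {I : Set ℝ} {u u' u'' : ℝ → ℝ} {M₂ : ℝ}

theorem integral_comp_inner_ge_sub_covarianceBilin (hI : I.OrdConnected)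
    (hu' : ∀ x ∈ I, HasDerivWithinAt u (u' x) I x)
    (hu'' : ∀ x ∈ I, HasDerivWithinAt u' (u'' x) I x) (hM₂ : ∀ x ∈ I, |u'' x| ≤ M₂)
    (hW : MemLp id 2 W) (hR : MemLp id 2 R)
    (hmemI : ∀ᵐ p ∂(W.prod R), ⟪p.2, p.1⟫ ∈ I) (hmemI' : ∀ᵐ r ∂ R, ⟪r, ∫ w, w ∂W⟫ ∈ I) :
    ∫ r, u ⟪r, ∫ w, w ∂W⟫ ∂ R - M₂ / 2 * ∫ r, covarianceBilin W r r ∂ R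
      ≤ ∫ p, u ⟪p.2, p.1⟫ ∂(W.prod R) := by
  have hf := integrable_comp_of_bounded_second_deriv hI hu' hu'' hM₂ (memLp_inner_prod hW hR) hmemI
  have hmemI_fiber : ∀ᵐ r ∂ R, ∀ᵐ w ∂W, ⟪r, w⟫ ∈ I := by
    rw [← Measure.prod_swap] at hmemI
    exact Measure.ae_ae_of_ae_prod (ae_of_ae_map measurable_swap.aemeasurable hmemI)
  have hfiber : ∀ᵐ r ∂ R,
      u ⟪r, ∫ w, w ∂W⟫ - M₂ / 2 * covarianceBilin W r r ≤ ∫ w, u ⟪r, w⟫ ∂W := by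
    filter_upwards [hmemI_fiber, hmemI'] with r hr hr'
    have hmean : ∫ w, ⟪r, w⟫ ∂W = ⟪r, ∫ w, w ∂W⟫ := integral_inner (hW.integrable one_le_two) r
    rw [covarianceBilin_self hW, ← hmean]
    exact integral_comp_ge_sub_variance hI hu' hu'' hM₂ (hW.const_inner r) hr (hmean ▸ hr')
  have hcov : Integrable (fun r => M₂ / 2 * covarianceBilin W r r) R :=
    (hR.integrable_bilin_self (covarianceBilin W)).const_mul (M₂ / 2)
  have hmeanterm : Integrable (fun r => u ⟪r, ∫ w, w ∂W⟫) R :=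
    integrable_comp_of_bounded_second_deriv hI hu' hu'' hM₂ (hR.inner_const (∫ w, w ∂W)) hmemI'
  rw [integral_prod_symm _ hf, ← integral_const_mul, ← integral_sub hmeanterm hcov]
  exact integral_mono_ae (hmeanterm.sub hcov) hf.integral_prod_right hfiber

end InnerProduct

lemma EuclideanSpace.covarianceBilin_apply_eq_sum {ι : Type*} [Fintype ι]
    {μ : Measure (EuclideanSpace ℝ ι)} [IsFiniteMeasure μ] (hμ : MemLp id 2 μ)
    (x y : EuclideanSpace ℝ ι) :
    covarianceBilin μ x y = ∑ i, ∑ j, x i * y j *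
      ∫ z, (z i - (∫ z, z ∂μ) i) * (z j - (∫ z, z ∂μ) j) ∂μ := by
  have hcoord : ∀ i, MemLp (fun z : EuclideanSpace ℝ ι => z i) 2 μ := hμ.eval_piLp
  have h := covarianceBilin_apply_pi hcoord x y
  simp only [WithLp.toLp_ofLp, Measure.map_id'] at h
  rw [h]
  simp only [covariance, eval_integral_piLp fun i => (hcoord i).integrable one_le_two]

theorem stmt_5_general {K : ℕ}
    (I : Set ℝ) (hI : Set.OrdConnected I)
    (u u' u'' : ℝ → ℝ)
    (hu' : ∀ x ∈ I, HasDerivWithinAt u (u' x) I x)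
    (hu'' : ∀ x ∈ I, HasDerivWithinAt u' (u'' x) I x)
    (M₂ : ℝ) (hM₂ : ∀ x ∈ I, |u'' x| ≤ M₂)
    (W : Measure (EuclideanSpace ℝ (Fin K))) [IsProbabilityMeasure W]
    (hWm : ∫⁻ w, (‖w‖₊ : ℝ≥0∞) ^ (2 : ℕ) ∂W < ⊤)
    (R : Measure (EuclideanSpace ℝ (Fin K))) [IsProbabilityMeasure R]
    (hRm : ∫⁻ r, (‖r‖₊ : ℝ≥0∞) ^ (2 : ℕ) ∂(R) < ⊤)
    (wbar : EuclideanSpace ℝ (Fin K)) (hwbar : wbar = ∫ w, w ∂W)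
    -- the covariance matrix Σ_W of W
    (SigW : Matrix (Fin K) (Fin K) ℝ)
    (hSigW : ∀ i j, SigW i j = ∫ w, (w i - wbar i) * (w j - wbar j) ∂W)
    (hmemI : ∀ᵐ p ∂(W.prod R), ((inner ℝ p.2 p.1 : ℝ)) ∈ I)
    (hmemI' : ∀ᵐ r ∂(R), ((inner ℝ r wbar : ℝ)) ∈ I) :
    (∫ r, u ((inner ℝ r wbar : ℝ)) ∂(R))
        - (M₂ / 2) * ∫ r, (∑ i, ∑ j, r i * SigW i j * r j) ∂(R)
      ≤ ∫ p, u ((inner ℝ p.2 p.1 : ℝ)) ∂(W.prod R) := by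
  subst hwbar
  have hW := memLp_id_two_of_lintegral_nnnorm_sq_lt_top hWm
  have hquad : ∀ r : EuclideanSpace ℝ (Fin K),
      ∑ i, ∑ j, r i * SigW i j * r j = covarianceBilin W r r := fun r => by
    simp only [EuclideanSpace.covarianceBilin_apply_eq_sum hW, ← hSigW]
    exact Finset.sum_congr rfl fun i _ => Finset.sum_congr rfl fun j _ => by ring
  simp only [hquad]
  exact integral_comp_inner_ge_sub_covarianceBilin hI hu' hu'' hM₂ hW
    (memLp_id_two_of_lintegral_nnnorm_sq_lt_top hRm) hmemI hmemI'

theorem stmt_5 {K : ℕ} (hK : 1 ≤ K)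
    (I : Set ℝ) (hI : Set.OrdConnected I)
    (u u' u'' : ℝ → ℝ)
    (hu' : ∀ x ∈ I, HasDerivWithinAt u (u' x) I x)
    (hu'' : ∀ x ∈ I, HasDerivWithinAt u' (u'' x) I x)
    (hu''cont : ContinuousOn u'' I)
    (M₂ : ℝ) (hM₂ : ∀ x ∈ I, |u'' x| ≤ M₂)
    (W : Measure (EuclideanSpace ℝ (Fin K))) [IsProbabilityMeasure W]
    (hWm : ∫⁻ w, (‖w‖₊ : ℝ≥0∞) ^ (2 : ℕ) ∂W < ⊤)
    (R : Measure (EuclideanSpace ℝ (Fin K))) [IsProbabilityMeasure R]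
    (hRm : ∫⁻ r, (‖r‖₊ : ℝ≥0∞) ^ (2 : ℕ) ∂(R) < ⊤)
    (wbar : EuclideanSpace ℝ (Fin K)) (hwbar : wbar = ∫ w, w ∂W)
    -- the covariance matrix Σ_W of W
    (SigW : Matrix (Fin K) (Fin K) ℝ)
    (hSigW : ∀ i j, SigW i j = ∫ w, (w i - wbar i) * (w j - wbar j) ∂W)
    (hmemI : ∀ᵐ p ∂(W.prod R), ((inner ℝ p.2 p.1 : ℝ)) ∈ I)
    (hmemI' : ∀ᵐ r ∂(R), ((inner ℝ r wbar : ℝ)) ∈ I) :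
    (∫ r, u ((inner ℝ r wbar : ℝ)) ∂(R))
        - (M₂ / 2) * ∫ r, (∑ i, ∑ j, r i * SigW i j * r j) ∂(R)
      ≤ ∫ p, u ((inner ℝ p.2 p.1 : ℝ)) ∂(W.prod R) :=
  stmt_5_general I hI u u' u'' hu' hu'' M₂ hM₂ W hWm R hRm wbar hwbar SigW hSigW hmemI hmemI'
end

section
/- Let K ≥ 1, let δ > 0, and let Σ and Σ' be real symmetric K × K matrices with Σ ⪰ δI and Σ' ⪰ δI (i.e., Σ − δI and Σ' − δI are positive semidefinite). Then ‖Σ^{1/2} − Σ'^{1/2}‖_F ≤ (1/(2√δ)) · ‖Σ − Σ'‖_F, where M^{1/2} denotes the unique positive semidefinite square root and ‖·‖_F the Frobenius norm. -/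
/-!
Write `A = Σ^{1/2}`, `B = Σ'^{1/2}` and `D = A - B`. Both square roots dominate `√δ I`, and
`Σ - Σ' = A D + D B`, so `tr (D (Σ - Σ')) = tr (D A D) + tr (D B D) ≥ 2 √δ ‖D‖_F²`, while
Cauchy–Schwarz bounds the left-hand side by `‖D‖_F ‖Σ - Σ'‖_F`.
-/

open Matrix

noncomputable section

/-- The Frobenius norm of a real matrix. -/
noncomputable def frobNorm {K : ℕ} (M : Matrix (Fin K) (Fin K) ℝ) : ℝ :=
  Real.sqrt (∑ i, ∑ j, (M i j) ^ 2)

open scoped ComplexOrder in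
/-- The positive semidefinite square root of a positive semidefinite matrix
(the definition `Matrix.PosSemidef.sqrt` of the older Mathlib, since removed). -/
noncomputable def Matrix.PosSemidef.sqrt {n : Type*} [Fintype n] [DecidableEq n]
    {𝕜 : Type*} [RCLike 𝕜] {A : Matrix n n 𝕜} (hA : PosSemidef A) : Matrix n n 𝕜 :=
  hA.1.eigenvectorUnitary.1 * diagonal ((↑) ∘ (√·) ∘ hA.1.eigenvalues) *
  (star hA.1.eigenvectorUnitary : Matrix n n 𝕜)

section SquareRoot

open scoped ComplexOrder

variable {n 𝕜 : Type*} [Fintype n] [DecidableEq n] [RCLike 𝕜]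

lemma Matrix.IsHermitian.le_eigenvalues_of_posSemidef_sub_smul_one {A : Matrix n n 𝕜}
    (hA : A.IsHermitian) {c : ℝ} (h : (A - c • (1 : Matrix n n 𝕜)).PosSemidef) (i : n) :
    c ≤ hA.eigenvalues i := by
  have hv : star ⇑(hA.eigenvectorBasis i) ⬝ᵥ ⇑(hA.eigenvectorBasis i) = 1 := by
    rw [dotProduct_comm, ← EuclideanSpace.inner_eq_star_dotProduct, inner_self_eq_norm_sq_to_K,
      hA.eigenvectorBasis.orthonormal.1 i]
    simp
  have := h.dotProduct_mulVec_nonneg (hA.eigenvectorBasis i)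
  rw [sub_mulVec, dotProduct_sub, smul_mulVec, one_mulVec, dotProduct_smul, hv] at this
  simpa [hA.eigenvalues_eq i, RCLike.real_smul_eq_coe_mul] using (RCLike.nonneg_iff.mp this).1

namespace Matrix.PosSemidef

lemma posSemidef_sqrt_sub_smul_one {A : Matrix n n 𝕜} (hA : A.PosSemidef) {c : ℝ}
    (h : (A - c • (1 : Matrix n n 𝕜)).PosSemidef) :
    (hA.sqrt - √c • (1 : Matrix n n 𝕜)).PosSemidef := by
  set U : Matrix n n 𝕜 := hA.1.eigenvectorUnitary.1
  have hU : U * star U = 1 := mem_unitaryGroup_iff.mp hA.1.eigenvectorUnitary.2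
  have hc : √c • (1 : Matrix n n 𝕜) = U * diagonal (fun _ ↦ (√c : 𝕜)) * star U := by
    rw [← smul_one_eq_diagonal, mul_smul_one, smul_mul, hU, RCLike.real_smul_eq_coe_smul (K := 𝕜)]
  rw [sqrt, hc, ← sub_mul, ← mul_sub, diagonal_sub]
  refine (posSemidef_diagonal_iff.mpr fun i ↦ ?_).mul_mul_conjTranspose_same U
  simpa using Real.sqrt_le_sqrt (hA.1.le_eigenvalues_of_posSemidef_sub_smul_one h i)

lemma sqrt_mul_self {A : Matrix n n 𝕜} (hA : A.PosSemidef) : hA.sqrt * hA.sqrt = A := by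
  set U : Matrix n n 𝕜 := hA.1.eigenvectorUnitary.1
  have hU : star U * U = 1 := mem_unitaryGroup_iff'.mp hA.1.eigenvectorUnitary.2
  conv_rhs => rw [hA.1.spectral_theorem, Unitary.conjStarAlgAut_apply]
  have hD : diagonal ((↑) ∘ (√·) ∘ hA.1.eigenvalues) * diagonal ((↑) ∘ (√·) ∘ hA.1.eigenvalues)
      = diagonal (RCLike.ofReal ∘ hA.1.eigenvalues : n → 𝕜) := by
    rw [diagonal_mul_diagonal]
    congr 1; funext i
    simp [← RCLike.ofReal_mul, Real.mul_self_sqrt (hA.eigenvalues_nonneg i)]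
  calc hA.sqrt * hA.sqrt
      = U * (diagonal ((↑) ∘ (√·) ∘ hA.1.eigenvalues) * (star U * U) *
          diagonal ((↑) ∘ (√·) ∘ hA.1.eigenvalues)) * star U := by
        simp only [sqrt, U, Matrix.mul_assoc]
    _ = _ := by rw [hU, Matrix.mul_one, hD]

end Matrix.PosSemidef

end SquareRoot

lemma Matrix.IsHermitian.mul_trace_mul_self_le {n R : Type*} [Fintype n] [DecidableEq n]
    [CommRing R] [PartialOrder R] [StarRing R] [AddLeftMono R]
    {D N : Matrix n n R} (hD : D.IsHermitian) {s : R}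
    (hN : (N - s • (1 : Matrix n n R)).PosSemidef) :
    s * (D * D).trace ≤ (D * N * D).trace := by
  have := (hN.mul_mul_conjTranspose_same D).trace_nonneg
  rwa [hD.eq, mul_sub, sub_mul, mul_smul_one, smul_mul, trace_sub, trace_smul, smul_eq_mul,
    sub_nonneg] at this

lemma frobNorm_nonneg {K : ℕ} (A : Matrix (Fin K) (Fin K) ℝ) : 0 ≤ frobNorm A :=
  Real.sqrt_nonneg _

lemma frobNorm_sq {K : ℕ} (A : Matrix (Fin K) (Fin K) ℝ) : frobNorm A ^ 2 = (Aᵀ * A).trace := by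
  rw [frobNorm, Real.sq_sqrt (by positivity), trace, Finset.sum_comm]
  simp [mul_apply, sq]

lemma trace_transpose_mul_le_frobNorm_mul {K : ℕ} (A B : Matrix (Fin K) (Fin K) ℝ) :
    (Aᵀ * B).trace ≤ frobNorm A * frobNorm B := by
  have := Real.sum_mul_le_sqrt_mul_sqrt Finset.univ (fun p : Fin K × Fin K ↦ A p.1 p.2)
    (fun p ↦ B p.1 p.2)
  simp only [trace, diag_apply, mul_apply, transpose_apply]
  rw [Finset.sum_comm]
  simpa [Fintype.sum_prod_type, frobNorm] using this

lemma two_mul_frobNorm_sub_le {K : ℕ} {A B : Matrix (Fin K) (Fin K) ℝ} {s : ℝ}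
    (hA : (A - s • (1 : Matrix (Fin K) (Fin K) ℝ)).PosSemidef)
    (hB : (B - s • (1 : Matrix (Fin K) (Fin K) ℝ)).PosSemidef) :
    2 * s * frobNorm (A - B) ≤ frobNorm (A * A - B * B) := by
  set D := A - B
  have hD : D.IsHermitian := by simpa [D] using hA.isHermitian.sub hB.isHermitian
  have hDt : Dᵀ = D := by simpa using hD.eq
  have hsplit : (D * (A * A - B * B)).trace = (D * A * D).trace + (D * B * D).trace := by
    have : A * A - B * B = A * D + D * B := by simp only [D, mul_sub, sub_mul]; abel
    rw [this, mul_add, trace_add, ← mul_assoc, trace_mul_comm D (D * B)]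
  have hlow : 2 * s * frobNorm D ^ 2 ≤ frobNorm D * frobNorm (A * A - B * B) := by
    calc 2 * s * frobNorm D ^ 2 = s * (D * D).trace + s * (D * D).trace := by
          rw [frobNorm_sq, hDt]; ring
      _ ≤ (D * A * D).trace + (D * B * D).trace :=
          add_le_add (hD.mul_trace_mul_self_le hA) (hD.mul_trace_mul_self_le hB)
      _ = (Dᵀ * (A * A - B * B)).trace := by rw [hDt, hsplit]
      _ ≤ frobNorm D * frobNorm (A * A - B * B) := trace_transpose_mul_le_frobNorm_mul _ _
  rcases (frobNorm_nonneg D).eq_or_lt with h0 | h0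
  · rw [← h0, mul_zero]
    exact frobNorm_nonneg _
  · exact le_of_mul_le_mul_right (by linarith) h0

theorem stmt_13_general {K : ℕ} (δ : ℝ) (hδ : 0 < δ)
    (SigA SigB : Matrix (Fin K) (Fin K) ℝ)
    (h1 : (SigA - δ • (1 : Matrix (Fin K) (Fin K) ℝ)).PosSemidef)
    (h2 : (SigB - δ • (1 : Matrix (Fin K) (Fin K) ℝ)).PosSemidef)
    (hSigA : SigA.PosSemidef) (hSigB : SigB.PosSemidef) :
    frobNorm (hSigA.sqrt - hSigB.sqrt) ≤ (1 / (2 * Real.sqrt δ)) * frobNorm (SigA - SigB) := by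
  have key := two_mul_frobNorm_sub_le (hSigA.posSemidef_sqrt_sub_smul_one h1)
    (hSigB.posSemidef_sqrt_sub_smul_one h2)
  rw [hSigA.sqrt_mul_self, hSigB.sqrt_mul_self] at key
  rw [one_div_mul_eq_div, le_div_iff₀ (by positivity)]
  linarith

theorem stmt_13 {K : ℕ} (hK : 1 ≤ K) (δ : ℝ) (hδ : 0 < δ)
    (SigA SigB : Matrix (Fin K) (Fin K) ℝ)
    (h1 : (SigA - δ • (1 : Matrix (Fin K) (Fin K) ℝ)).PosSemidef)
    (h2 : (SigB - δ • (1 : Matrix (Fin K) (Fin K) ℝ)).PosSemidef)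
    (hSigA : SigA.PosSemidef) (hSigB : SigB.PosSemidef) :
    frobNorm (hSigA.sqrt - hSigB.sqrt) ≤ (1 / (2 * Real.sqrt δ)) * frobNorm (SigA - SigB) :=
  stmt_13_general δ hδ SigA SigB h1 h2 hSigA hSigB
end
end

section
/- Let K ≥ 1, let r₁, …, r_n ∈ ℝ^K, let R̂ := (1/n) ∑_{i=1}^n δ_{r_i} be the empirical measure, let ε ≥ 0, and let w ∈ ℝ^K. Then the supremum, over all Borel probability measures R on ℝ^K with finite first moment satisfying W₁(R, R̂) ≤ ε, of ∫ (−⟨r,w⟩) dR(r), equals ∫ (−⟨r,w⟩) dR̂(r) + ε‖w‖, where ‖·‖ and ⟨·,·⟩ are the Euclidean norm and inner product. -/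
open MeasureTheory ENNReal

noncomputable section

/-- The empirical measure of the sample `r₁, …, r_n`. -/
noncomputable def empiricalMeasure {K : ℕ} (n : ℕ) (r : Fin n → EuclideanSpace ℝ (Fin K)) :
    Measure (EuclideanSpace ℝ (Fin K)) :=
  (n : ℝ≥0∞)⁻¹ • ∑ i : Fin n, Measure.dirac (r i)

/-! The loss `x ↦ -⟪x, w⟫` is `‖w‖`-Lipschitz, so along any coupling its expectations under the
two marginals differ by at most `‖w‖` times the transport cost; on the ball `W₁(R, R̂) ≤ ε` the
gain is therefore at most `ε‖w‖`. Translating `R̂` by `-ε w / ‖w‖` moves every atom a distance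
`ε` in the direction of steepest increase, so the bound is attained. -/

open Filter Topology

section Wasserstein

variable {X : Type*} [MeasurableSpace X] [PseudoEMetricSpace X]

lemma exists_isCoupling_lintegral_edist_lt {μ ν : Measure X} {c : ℝ≥0∞} (h : W1 μ ν < c) :
    ∃ π : Measure (X × X), IsCoupling π μ ν ∧ ∫⁻ p, edist p.1 p.2 ∂π < c := by
  simpa only [W1, iInf_lt_iff, exists_prop] using h

lemma W1_map_le (μ : Measure X) {g : X → X} (hg : Measurable g) :
    W1 (μ.map g) μ ≤ ∫⁻ x, edist (g x) x ∂μ := by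
  have hφ : Measurable fun x => (g x, x) := hg.prodMk measurable_id
  have hπ : IsCoupling (μ.map fun x => (g x, x)) (μ.map g) μ :=
    ⟨by rw [Measure.map_map measurable_fst hφ]; rfl,
      by rw [Measure.map_map measurable_snd hφ]; exact Measure.map_id⟩
  unfold W1
  exact (iInf₂_le (μ.map fun x => (g x, x)) hπ).trans (lintegral_map_le _ _)

variable {G : Type*} [NormedAddCommGroup G] [NormedSpace ℝ G]

lemma IsCoupling.edist_integral_le {π : Measure (X × X)} {μ ν : Measure X}
    (hπ : IsCoupling π μ ν) {L : NNReal} {f : X → G} (hf : LipschitzWith L f)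
    (hμ : Integrable f μ) (hν : Integrable f ν) :
    edist (∫ x, f x ∂μ) (∫ x, f x ∂ν) ≤ L * ∫⁻ p, edist p.1 p.2 ∂π := by
  obtain ⟨rfl, rfl⟩ := hπ
  rw [integral_map measurable_fst.aemeasurable hμ.1,
    integral_map measurable_snd.aemeasurable hν.1, ← lintegral_const_mul' _ _ coe_ne_top]
  calc edist (∫ p, f p.1 ∂π) (∫ p, f p.2 ∂π)
      ≤ ∫⁻ p, edist (f p.1) (f p.2) ∂π :=
        edist_integral_le_lintegral_edist
          ((integrable_map_measure hμ.1 measurable_fst.aemeasurable).mp hμ)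
          ((integrable_map_measure hν.1 measurable_snd.aemeasurable).mp hν)
    _ ≤ ∫⁻ p, L * edist p.1 p.2 ∂π := lintegral_mono fun p => hf p.1 p.2

/-- The easy half of Kantorovich–Rubinstein duality. The infimum defining `W1` need not be
attained, so one uses couplings of cost below `δ` and lets `δ ↓ ε`. -/
lemma dist_integral_le_of_W1_le {μ ν : Measure X} {L : NNReal} {f : X → G}
    (hf : LipschitzWith L f) (hμ : Integrable f μ) (hν : Integrable f ν) {ε : ℝ} (hε : 0 ≤ ε)
    (hW : W1 μ ν ≤ ENNReal.ofReal ε) :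
    dist (∫ x, f x ∂μ) (∫ x, f x ∂ν) ≤ L * ε := by
  have hlim : Tendsto (fun δ : ℝ => L * δ) (𝓝[>] ε) (𝓝 (L * ε)) :=
    ((continuous_const.mul continuous_id).tendsto ε).mono_left nhdsWithin_le_nhds
  refine ge_of_tendsto hlim (eventually_nhdsWithin_of_forall fun δ (hδ : ε < δ) => ?_)
  have hδ₀ : 0 ≤ δ := hε.trans hδ.le
  obtain ⟨π, hπ, hcost⟩ := exists_isCoupling_lintegral_edist_lt
    (hW.trans_lt ((ENNReal.ofReal_lt_ofReal_iff_of_nonneg hε).mpr hδ))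
  rw [← edist_le_ofReal (by positivity), ENNReal.ofReal_mul L.coe_nonneg, ofReal_coe_nnreal]
  exact (hπ.edist_integral_le hf hμ hν).trans (by gcongr)

end Wasserstein

lemma W1_map_add_const_le {E : Type*} [NormedAddCommGroup E] [MeasurableSpace E]
    [BorelSpace E] (μ : Measure E) [IsProbabilityMeasure μ] (v : E) :
    W1 (μ.map (· + v)) μ ≤ ‖v‖ₑ :=
  (W1_map_le μ (measurable_add_const v)).trans (by simp [edist_eq_enorm_sub])

lemma integrable_id_iff_lintegral_nnnorm_lt_top {E : Type*} [NormedAddCommGroup E]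
    [MeasurableSpace E] [OpensMeasurableSpace E] [SecondCountableTopology E] {μ : Measure E} :
    Integrable id μ ↔ ∫⁻ x, (‖x‖₊ : ℝ≥0∞) ∂μ < ⊤ :=
  ⟨fun h => h.2, fun h => ⟨aestronglyMeasurable_id, h⟩⟩

section InnerProductSpace

variable {E : Type*} [NormedAddCommGroup E] [InnerProductSpace ℝ E]

lemma lipschitzWith_neg_inner_left (w : E) :
    LipschitzWith ‖w‖₊ fun x : E => -(inner ℝ x w : ℝ) := by
  refine LipschitzWith.of_dist_le_mul fun x y => ?_
  rw [Real.dist_eq, neg_sub_neg, ← inner_sub_left, coe_nnnorm, mul_comm, dist_comm, dist_eq_norm]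
  exact abs_real_inner_le_norm _ _

lemma exists_norm_le_inner_eq_neg_mul_norm (w : E) {ε : ℝ} (hε : 0 ≤ ε) :
    ∃ v : E, ‖v‖ ≤ ε ∧ (inner ℝ v w : ℝ) = -(ε * ‖w‖) := by
  rcases eq_or_ne w 0 with rfl | hw
  · exact ⟨0, by simpa using hε, by simp⟩
  have hw' : ‖w‖ ≠ 0 := norm_ne_zero_iff.mpr hw
  refine ⟨-(ε / ‖w‖) • w, ?_, ?_⟩
  · rw [norm_smul, norm_neg, norm_div, norm_norm, Real.norm_of_nonneg hε, div_mul_cancel₀ _ hw']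
  · rw [real_inner_smul_left, real_inner_self_eq_norm_sq]
    field_simp

variable [MeasurableSpace E] [BorelSpace E] [SecondCountableTopology E]

theorem isGreatest_integral_neg_inner_W1_ball (μ : Measure E) [IsProbabilityMeasure μ]
    (hμ : ∫⁻ x, (‖x‖₊ : ℝ≥0∞) ∂μ < ⊤) {ε : ℝ} (hε : 0 ≤ ε) (w : E) :
    IsGreatest {y : ℝ | ∃ R : Measure E,
        IsProbabilityMeasure R ∧ (∫⁻ x, (‖x‖₊ : ℝ≥0∞) ∂ R) < ⊤ ∧
        W1 R μ ≤ ENNReal.ofReal ε ∧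
        y = ∫ x, -(inner ℝ x w : ℝ) ∂ R}
      ((∫ x, -(inner ℝ x w : ℝ) ∂μ) + ε * ‖w‖) := by
  rw [← integrable_id_iff_lintegral_nnnorm_lt_top] at hμ
  have hμw : Integrable (fun x => -(inner ℝ x w : ℝ)) μ := (hμ.inner_const (𝕜 := ℝ) w).neg
  constructor
  · obtain ⟨v, hv, hvw⟩ := exists_norm_le_inner_eq_neg_mul_norm w hε
    have hmeas : Measurable (· + v : E → E) := measurable_add_const v
    refine ⟨μ.map (· + v), Measure.isProbabilityMeasure_map hmeas.aemeasurable, ?_, ?_, ?_⟩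
    · rw [← integrable_id_iff_lintegral_nnnorm_lt_top,
        integrable_map_measure aestronglyMeasurable_id hmeas.aemeasurable]
      exact hμ.add (integrable_const v)
    · exact (W1_map_add_const_le μ v).trans (by rwa [← ofReal_norm, ofReal_le_ofReal_iff hε])
    · rw [eq_comm, integral_map hmeas.aemeasurable (by fun_prop)]
      simp only [inner_add_left, neg_add]
      rw [integral_add hμw (integrable_const _), integral_const, hvw]
      simp
  · rintro y ⟨R, hR, hRμ, hW, rfl⟩
    rw [← integrable_id_iff_lintegral_nnnorm_lt_top] at hRμ
    have h := dist_integral_le_of_W1_le (lipschitzWith_neg_inner_left w)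
      (hRμ.inner_const (𝕜 := ℝ) w).neg hμw hε hW
    rw [Real.dist_eq, abs_sub_le_iff, coe_nnnorm] at h
    linarith [h.1]

end InnerProductSpace

section Empirical

variable {K n : ℕ}

lemma isProbabilityMeasure_empiricalMeasure (hn : n ≠ 0)
    (r : Fin n → EuclideanSpace ℝ (Fin K)) :
    IsProbabilityMeasure (empiricalMeasure n r) := by
  constructor
  simp [empiricalMeasure, ENNReal.inv_mul_cancel, hn]

lemma integrable_empiricalMeasure (hn : n ≠ 0) (r : Fin n → EuclideanSpace ℝ (Fin K))
    {F : Type*} [NormedAddCommGroup F] (f : EuclideanSpace ℝ (Fin K) → F) :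
    Integrable f (empiricalMeasure n r) :=
  (integrable_finsetSum_measure.mpr fun _ _ => integrable_dirac enorm_lt_top).smul_measure
    (ENNReal.inv_ne_top.mpr (Nat.cast_ne_zero.mpr hn))

end Empirical

theorem stmt_14_general {K : ℕ} (n : ℕ) (hn : 1 ≤ n)
    (r : Fin n → EuclideanSpace ℝ (Fin K)) (ε : ℝ) (hε : 0 ≤ ε)
    (w : EuclideanSpace ℝ (Fin K)) :
    sSup {y : ℝ | ∃ R : Measure (EuclideanSpace ℝ (Fin K)),
        IsProbabilityMeasure R ∧ (∫⁻ x, (‖x‖₊ : ℝ≥0∞) ∂ R) < ⊤ ∧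
        W1 R (empiricalMeasure n r) ≤ ENNReal.ofReal ε ∧
        y = ∫ x, -(inner ℝ x w : ℝ) ∂ R}
      = (∫ x, -(inner ℝ x w : ℝ) ∂(empiricalMeasure n r)) + ε * ‖w‖ := by
  have hn₀ : n ≠ 0 := Nat.one_le_iff_ne_zero.mp hn
  have := isProbabilityMeasure_empiricalMeasure hn₀ r
  have hmoment :=
    integrable_id_iff_lintegral_nnnorm_lt_top.mp (integrable_empiricalMeasure hn₀ r id)
  exact (isGreatest_integral_neg_inner_W1_ball _ hmoment hε w).csSup_eq

theorem stmt_14 {K : ℕ} (hK : 1 ≤ K) (n : ℕ) (hn : 1 ≤ n)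
    (r : Fin n → EuclideanSpace ℝ (Fin K)) (ε : ℝ) (hε : 0 ≤ ε)
    (w : EuclideanSpace ℝ (Fin K)) :
    sSup {y : ℝ | ∃ R : Measure (EuclideanSpace ℝ (Fin K)),
        IsProbabilityMeasure R ∧ (∫⁻ x, (‖x‖₊ : ℝ≥0∞) ∂ R) < ⊤ ∧
        W1 R (empiricalMeasure n r) ≤ ENNReal.ofReal ε ∧
        y = ∫ x, -(inner ℝ x w : ℝ) ∂ R}
      = (∫ x, -(inner ℝ x w : ℝ) ∂(empiricalMeasure n r)) + ε * ‖w‖ :=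
  stmt_14_general n hn r ε hε w
end
end

section
/- Let d, K ≥ 1, let P be a Borel probability measure on ℝ^d with finite first moment and mean θ̂ := ∫ θ dP(θ), let θ ↦ R_θ be a measurable family of Borel probability measures on ℝ^K with finite first moments, and let N ⊆ ℝ^d be measurable with θ̂ ∈ N. Let G ≥ 0, let ω : [0,∞) → [0,∞) be nondecreasing with ω(0) = 0, and let Φ : ℝ^d → [0,∞) be measurable and P-integrable. Let f : ℝ^K → ℝ be 1-Lipschitz and set h_f(θ) := ∫ f dR_θ. Assume: (H1) there exists G_f ∈ ℝ^d with ‖G_f‖ ≤ G such that for all θ ∈ N, |h_f(θ) − h_f(θ̂) − ⟨G_f, θ − θ̂⟩| ≤ ω(‖θ − θ̂‖); (H3) |h_f(θ) − h_f(θ̂)| ≤ Φ(θ) for all θ. Assume also that ‖θ − θ̂‖ and ω(‖θ − θ̂‖) are P-integrable. Then ∫ h_f(θ) dP(θ) − h_f(θ̂) ≤ ∫ ω(‖θ − θ̂‖) dP(θ) + G · ∫_{Nᶜ} ‖θ − θ̂‖ dP(θ) + ∫_{Nᶜ} Φ(θ) dP(θ). -/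
open MeasureTheory ENNReal

open scoped RealInnerProductSpace

/-!
On `N` the linearization bounds `h θ - h θ̂` by `⟪G_f, θ - θ̂⟫ + ω(‖θ - θ̂‖)`, and on `Nᶜ` the
envelope bounds it by `Φ θ`. Since `θ̂` is the mean of `P`, the linear term has total integral
zero, so its integral over `N` equals minus its integral over `Nᶜ`, which is at most
`‖G_f‖ ∫_{Nᶜ} ‖θ - θ̂‖ dP` by Cauchy–Schwarz.
-/

theorem stronglyMeasurable_integral_of_measurable {α β E : Type*} [MeasurableSpace α]
    [MeasurableSpace β] [NormedAddCommGroup E] [NormedSpace ℝ E]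
    {R : α → Measure β} (hR : Measurable R) [hRprob : ∀ a, IsProbabilityMeasure (R a)]
    {f : β → E} (hf : StronglyMeasurable f) :
    StronglyMeasurable fun a => ∫ x, f x ∂(R a) := by
  let κ : ProbabilityTheory.Kernel α β := ⟨R, hR⟩
  have : ProbabilityTheory.IsMarkovKernel κ := ⟨hRprob⟩
  exact StronglyMeasurable.integral_kernel_prod_right (κ := κ)
    (f := fun _ x => f x) (hf.comp_measurable measurable_snd)

section Centered

variable {E : Type*} [NormedAddCommGroup E] [InnerProductSpace ℝ E] [CompleteSpace E]
  [MeasurableSpace E] {P : Measure E} [IsProbabilityMeasure P] {m : E}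

theorem integral_inner_sub_mean_eq_zero (hP : Integrable (fun θ => θ) P)
    (hm : m = ∫ θ, θ ∂P) (v : E) : ∫ θ, ⟪v, θ - m⟫ ∂P = 0 := by
  have hsub : Integrable (fun θ => θ - m) P := hP.sub (integrable_const m)
  rw [integral_inner hsub, integral_sub hP (integrable_const m), integral_const, ← hm]
  simp

theorem setIntegral_inner_sub_mean_le (hP : Integrable (fun θ => θ) P)
    (hm : m = ∫ θ, θ ∂P) {N : Set E} (hN : MeasurableSet N) (v : E) :
    ∫ θ in N, ⟪v, θ - m⟫ ∂P ≤ ‖v‖ * ∫ θ in Nᶜ, ‖θ - m‖ ∂P := by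
  have hsub : Integrable (fun θ => θ - m) P := hP.sub (integrable_const m)
  have hinner : Integrable (fun θ => ⟪v, θ - m⟫) P := hsub.const_inner v
  have hsplit := integral_add_compl hN hinner
  rw [integral_inner_sub_mean_eq_zero hP hm] at hsplit
  calc ∫ θ in N, ⟪v, θ - m⟫ ∂P = ∫ θ in Nᶜ, -⟪v, θ - m⟫ ∂P := by
        rw [integral_neg]; linarith
    _ ≤ ∫ θ in Nᶜ, ‖v‖ * ‖θ - m‖ ∂P :=
        setIntegral_mono_on hinner.neg.integrableOn (hsub.norm.const_mul _).integrableOn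
          hN.compl fun θ _ => (neg_le_abs _).trans (abs_real_inner_le_norm v (θ - m))
    _ = ‖v‖ * ∫ θ in Nᶜ, ‖θ - m‖ ∂P := integral_const_mul _ _

theorem integral_sub_apply_mean_le_of_linearization (hP : Integrable (fun θ => θ) P) (hm : m = ∫ θ, θ ∂P)
    {h w Φ : E → ℝ} (hh : Integrable h P) (hw : Integrable w P) (hw0 : ∀ θ, 0 ≤ w θ)
    (hΦ : Integrable Φ P) {N : Set E} (hN : MeasurableSet N) {v : E} {G : ℝ} (hv : ‖v‖ ≤ G)
    (hlin : ∀ θ ∈ N, h θ - h m - ⟪v, θ - m⟫ ≤ w θ) (hout : ∀ θ ∈ Nᶜ, h θ - h m ≤ Φ θ) :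
    ∫ θ, h θ ∂P - h m
      ≤ ∫ θ, w θ ∂P + G * ∫ θ in Nᶜ, ‖θ - m‖ ∂P + ∫ θ in Nᶜ, Φ θ ∂P := by
  have hg : Integrable (fun θ => h θ - h m) P := hh.sub (integrable_const _)
  have hinner : Integrable (fun θ => ⟪v, θ - m⟫) P :=
    (hP.sub (integrable_const m)).const_inner v
  have hin : ∫ θ in N, (h θ - h m) ∂P ≤ ∫ θ in N, ⟪v, θ - m⟫ ∂P + ∫ θ in N, w θ ∂P := by
    rw [← integral_add hinner.integrableOn hw.integrableOn]
    exact setIntegral_mono_on hg.integrableOn (hinner.add hw).integrableOn hN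
      fun θ hθ => by linarith [hlin θ hθ]
  have hinnerN : ∫ θ in N, ⟪v, θ - m⟫ ∂P ≤ G * ∫ θ in Nᶜ, ‖θ - m‖ ∂P :=
    (setIntegral_inner_sub_mean_le hP hm hN v).trans
      (mul_le_mul_of_nonneg_right hv (integral_nonneg fun _ => norm_nonneg _))
  have hwN : ∫ θ in N, w θ ∂P ≤ ∫ θ, w θ ∂P := setIntegral_le_integral hw (ae_of_all _ hw0)
  have hcompl : ∫ θ in Nᶜ, (h θ - h m) ∂P ≤ ∫ θ in Nᶜ, Φ θ ∂P :=
    setIntegral_mono_on hg.integrableOn hΦ.integrableOn hN.compl hout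
  have hmean : ∫ θ, h θ ∂P - h m = ∫ θ, (h θ - h m) ∂P := by
    rw [integral_sub hh (integrable_const _), integral_const]
    simp
  rw [hmean, ← integral_add_compl hN hg]
  linarith

end Centered

theorem stmt_17_general {d K : ℕ}
    (P : Measure (EuclideanSpace ℝ (Fin d))) [IsProbabilityMeasure P]
    (hPm : Integrable (fun θ => θ) P)
    (θhat : EuclideanSpace ℝ (Fin d)) (hθhat : θhat = ∫ θ, θ ∂P)
    (R : EuclideanSpace ℝ (Fin d) → Measure (EuclideanSpace ℝ (Fin K)))
    (hRmeas : Measurable R)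
    (hRprob : ∀ θ, IsProbabilityMeasure (R θ))
    (N : Set (EuclideanSpace ℝ (Fin d))) (hN : MeasurableSet N)
    (G : ℝ)
    (ω : ℝ → ℝ)
    (hωnonneg : ∀ t, 0 ≤ t → 0 ≤ ω t)
    (Φ : EuclideanSpace ℝ (Fin d) → ℝ) (hΦint : Integrable Φ P)
    (f : EuclideanSpace ℝ (Fin K) → ℝ) (hf : LipschitzWith 1 f)
    -- (H1): local linearization with bounded coefficient
    (Gf : EuclideanSpace ℝ (Fin d)) (hGf : ‖Gf‖ ≤ G)
    (hH1 : ∀ θ ∈ N,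
      |(∫ x, f x ∂(R θ)) - (∫ x, f x ∂(R θhat)) - (inner ℝ Gf (θ - θhat) : ℝ)|
        ≤ ω ‖θ - θhat‖)
    -- (H3): integrable envelope
    (hH3 : ∀ θ, |(∫ x, f x ∂(R θ)) - ∫ x, f x ∂(R θhat)| ≤ Φ θ)
    -- integrability of the displayed quantities
    (hint2 : Integrable (fun θ => ω ‖θ - θhat‖) P) :
    (∫ θ, (∫ x, f x ∂(R θ)) ∂P) - (∫ x, f x ∂(R θhat))
      ≤ (∫ θ, ω ‖θ - θhat‖ ∂P)
        + G * (∫ θ in Nᶜ, ‖θ - θhat‖ ∂P)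
        + ∫ θ in Nᶜ, Φ θ ∂P := by
  set h := fun θ => ∫ x, f x ∂(R θ)
  have hmeas : StronglyMeasurable h :=
    stronglyMeasurable_integral_of_measurable hRmeas hf.continuous.stronglyMeasurable
  have hh : Integrable h P := by
    have hdev : Integrable (fun θ => h θ - h θhat) P :=
      hΦint.mono' (hmeas.sub stronglyMeasurable_const).aestronglyMeasurable
        (ae_of_all _ hH3)
    exact (hdev.add (integrable_const (h θhat))).congr (ae_of_all _ fun θ => sub_add_cancel _ _)
  exact integral_sub_apply_mean_le_of_linearization hPm hθhat hh hint2
    (fun θ => hωnonneg _ (norm_nonneg _)) hΦint hN hGf (fun θ hθ => (le_abs_self _).trans (hH1 θ hθ))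
    (fun θ _ => (le_abs_self _).trans (hH3 θ))

theorem stmt_17 {d K : ℕ} (hd : 1 ≤ d) (hK : 1 ≤ K)
    (P : Measure (EuclideanSpace ℝ (Fin d))) [IsProbabilityMeasure P]
    (hPm : Integrable (fun θ => θ) P)
    (θhat : EuclideanSpace ℝ (Fin d)) (hθhat : θhat = ∫ θ, θ ∂P)
    (R : EuclideanSpace ℝ (Fin d) → Measure (EuclideanSpace ℝ (Fin K)))
    (hRmeas : Measurable R)
    (hRprob : ∀ θ, IsProbabilityMeasure (R θ))
    (hRmom : ∀ θ, ∫⁻ r, (‖r‖₊ : ℝ≥0∞) ∂(R θ) < ⊤)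
    (N : Set (EuclideanSpace ℝ (Fin d))) (hN : MeasurableSet N) (hθhatN : θhat ∈ N)
    (G : ℝ) (hG : 0 ≤ G)
    (ω : ℝ → ℝ) (hωmono : MonotoneOn ω (Set.Ici 0)) (hω0 : ω 0 = 0)
    (hωnonneg : ∀ t, 0 ≤ t → 0 ≤ ω t)
    (Φ : EuclideanSpace ℝ (Fin d) → ℝ) (hΦmeas : Measurable Φ)
    (hΦnonneg : ∀ θ, 0 ≤ Φ θ) (hΦint : Integrable Φ P)
    (f : EuclideanSpace ℝ (Fin K) → ℝ) (hf : LipschitzWith 1 f)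
    -- (H1): local linearization with bounded coefficient
    (Gf : EuclideanSpace ℝ (Fin d)) (hGf : ‖Gf‖ ≤ G)
    (hH1 : ∀ θ ∈ N,
      |(∫ x, f x ∂(R θ)) - (∫ x, f x ∂(R θhat)) - (inner ℝ Gf (θ - θhat) : ℝ)|
        ≤ ω ‖θ - θhat‖)
    -- (H3): integrable envelope
    (hH3 : ∀ θ, |(∫ x, f x ∂(R θ)) - ∫ x, f x ∂(R θhat)| ≤ Φ θ)
    -- integrability of the displayed quantities
    (hint1 : Integrable (fun θ => ‖θ - θhat‖) P)
    (hint2 : Integrable (fun θ => ω ‖θ - θhat‖) P) :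
    (∫ θ, (∫ x, f x ∂(R θ)) ∂P) - (∫ x, f x ∂(R θhat))
      ≤ (∫ θ, ω ‖θ - θhat‖ ∂P)
        + G * (∫ θ in Nᶜ, ‖θ - θhat‖ ∂P)
        + ∫ θ in Nᶜ, Φ θ ∂P :=
  stmt_17_general P hPm θhat hθhat R hRmeas hRprob N hN G ω hωnonneg Φ hΦint f hf Gf hGf hH1 hH3
    hint2
end
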